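/- If Δ is a pure strongly connected d-dimensional simplicial complex on [n] with a unit interval order and every vertex lies in a facet, then for every i with 1 ≤ i ≤ n-d, the gap-free set H_i = {i, i+1, ..., i+d} is a facet of Δ. -/

import Mathlib

open Finset

/-- A simplicial complex on vertex set `ℕ`, given as the finite family of all of its
faces, closed under taking subsets. -/
def IsComplex (Δ : Finset (Finset ℕ)) : Prop :=
  ∀ F ∈ Δ, ∀ G ⊆ F, G ∈ Δ

/-- `F` is a facet (maximal face) of `Δ`. -/
def IsFacet (Δ : Finset (Finset ℕ)) (F : Finset ℕ) : Prop :=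
  F ∈ Δ ∧ ∀ G ∈ Δ, F ⊆ G → F = G

/-- The finset of facets of `Δ`. -/
def facets (Δ : Finset (Finset ℕ)) : Finset (Finset ℕ) :=
  Δ.filter fun F => ∀ G ∈ Δ, F ⊆ G → F = G

/-- `Δ` is pure of dimension `d`: every facet has `d + 1` vertices. -/
def IsPure (d : ℕ) (Δ : Finset (Finset ℕ)) : Prop :=
  ∀ F, IsFacet Δ F → F.card = d + 1

/-- Dual graph of a pure `d`-dimensional complex: nodes are facets, two facets are
adjacent iff they share a face with `d` elements (a codimension-one face). -/
def dualGraph (d : ℕ) (Δ : Finset (Finset ℕ)) : SimpleGraph {F // F ∈ facets Δ} :=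
  SimpleGraph.fromRel fun F G => ((F : Finset ℕ) ∩ (G : Finset ℕ)).card = d

/-- `Δ` is strongly connected: its dual graph is connected. -/
def StronglyConnected (d : ℕ) (Δ : Finset (Finset ℕ)) : Prop :=
  (dualGraph d Δ).Connected

/-- The labeling of the vertices by `ℕ` is a unit interval order: whenever
`F = {v₀ < v₁ < ⋯ < v_d}` is a facet, every `(d+1)`-element subset of the integer
interval `{v₀, v₀+1, …, v_d}` is a facet. -/
def UnitIntervalOrder (d : ℕ) (Δ : Finset (Finset ℕ)) : Prop :=
  ∀ F, IsFacet Δ F → ∀ hF : F.Nonempty,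
    ∀ S ⊆ Finset.Icc (F.min' hF) (F.max' hF), S.card = d + 1 → IsFacet Δ S

/-- The increasing list of the vertices of a face. -/
def sortedList (F : Finset ℕ) : List ℕ := F.sort (· ≤ ·)

/-- Lexicographic order on faces, comparing the increasing lists of vertices. -/
def faceLexLt (F G : Finset ℕ) : Prop :=
  List.Lex (· < ·) (sortedList F) (sortedList G)

/-- `L` lists exactly the facets of `Δ`, in lexicographic order. -/
def LexFacetList (Δ : Finset (Finset ℕ)) (L : List (Finset ℕ)) : Prop :=
  L.Nodup ∧ L.toFinset = facets Δ ∧ L.Pairwise faceLexLt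

/-- `L` is a shelling order of the pure `d`-dimensional complex `Δ`: it lists the
facets of `Δ` so that for each `k`, the intersection of `⟨L[k+1]⟩` with
`⟨L[0], …, L[k]⟩` is pure of dimension `d - 1`, i.e. it is nonempty and each of
its faces is contained in a common `d`-element face of `L[k+1]` and some earlier
facet. -/
def IsShellingOrder (d : ℕ) (Δ : Finset (Finset ℕ)) (L : List (Finset ℕ)) : Prop :=
  L.Nodup ∧ L.toFinset = facets Δ ∧
  ∀ (k : ℕ) (hk : k + 1 < L.length),
    (∃ τ ⊆ L.get ⟨k + 1, hk⟩, τ.card = d ∧ ∃ G ∈ L.take (k + 1), τ ⊆ G) ∧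
    (∀ σ ⊆ L.get ⟨k + 1, hk⟩, (∃ G ∈ L.take (k + 1), σ ⊆ G) →
      ∃ τ, σ ⊆ τ ∧ τ ⊆ L.get ⟨k + 1, hk⟩ ∧ τ.card = d ∧ ∃ G ∈ L.take (k + 1), τ ⊆ G)

/-- `Δ` is shellable (as a pure `d`-dimensional complex). -/
def Shellable (d : ℕ) (Δ : Finset (Finset ℕ)) : Prop :=
  ∃ L, IsShellingOrder d Δ L

/-- The link of the vertex `v` in `Δ`. -/
def linkC (Δ : Finset (Finset ℕ)) (v : ℕ) : Finset (Finset ℕ) :=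
  Δ.filter fun E => v ∉ E ∧ insert v E ∈ Δ

/-- The deletion of the vertex `v` from `Δ`. -/
def delC (Δ : Finset (Finset ℕ)) (v : ℕ) : Finset (Finset ℕ) :=
  Δ.filter fun E => v ∉ E

/-- Vertex decomposability: `Δ` is a simplex (possibly the void/empty simplex `{∅}`),
or it has a shedding vertex `v` whose link and deletion are vertex decomposable and
such that every facet of the deletion is a facet of `Δ`. -/
inductive VertexDecomposable : Finset (Finset ℕ) → Prop
  | simplex (V : Finset ℕ) : VertexDecomposable V.powerset
  | shed (Δ : Finset (Finset ℕ)) (v : ℕ) :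
      VertexDecomposable (linkC Δ v) → VertexDecomposable (delC Δ v) →
      (∀ F, IsFacet (delC Δ v) F → IsFacet Δ F) → VertexDecomposable Δ

/-!
Along a path in the dual graph from a facet containing `i` to a facet containing `n ≥ i + d`,
take the first facet `F` reaching `i + d`. The facet before it lies below `i + d` and shares `d`
vertices with `F`; these `d` distinct numbers below `i + d` cannot all exceed `i`, so `F` also
has a vertex `≤ i`. Hence `{i, …, i + d}` lies between the extreme vertices of `F`, and the unit
interval order makes it a facet.
-/

theorem SimpleGraph.Reachable.exists_and_of_adj {V : Type*} {G : SimpleGraph V}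
    {P Q : V → Prop} {u v : V} (h : G.Reachable u v) (hu : P u) (hv : Q v)
    (step : ∀ x y, G.Adj x y → ¬Q x → P y) : ∃ x, P x ∧ Q x := by
  obtain ⟨p⟩ := h
  induction p with
  | nil => exact ⟨_, hu, hv⟩
  | @cons x _ _ hadj _ ih =>
    by_cases hQ : Q x
    · exact ⟨_, hu, hQ⟩
    · exact ih (step _ _ hadj hQ) hv

theorem Finset.exists_le_of_forall_lt_add {s : Finset ℕ} {d i : ℕ} (hd : 0 < d)
    (hs : d ≤ #s) (hlt : ∀ x ∈ s, x < i + d) : ∃ x ∈ s, x ≤ i := by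
  by_contra! hgt
  have hsub : s ⊆ Ioo i (i + d) := fun x hx => mem_Ioo.mpr ⟨hgt x hx, hlt x hx⟩
  have := card_le_card hsub
  rw [Nat.card_Ioo] at this
  omega

theorem mem_facets {Δ : Finset (Finset ℕ)} {F : Finset ℕ} : F ∈ facets Δ ↔ IsFacet Δ F :=
  mem_filter

theorem exists_isFacet_superset {Δ : Finset (Finset ℕ)} {F : Finset ℕ} (hF : F ∈ Δ) :
    ∃ G, IsFacet Δ G ∧ F ⊆ G := by
  obtain ⟨G, hFG, hG⟩ := Δ.exists_le_maximal hF
  exact ⟨G, ⟨hG.prop, fun H hH hGH => le_antisymm hGH (hG.le_of_ge hH hGH)⟩, hFG⟩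

theorem exists_isFacet_mem_of_mem_sup {Δ : Finset (Finset ℕ)} {v : ℕ} (hv : v ∈ Δ.sup id) :
    ∃ F, IsFacet Δ F ∧ v ∈ F := by
  obtain ⟨E, hE, hvE⟩ := mem_sup.mp hv
  obtain ⟨F, hF, hEF⟩ := exists_isFacet_superset hE
  exact ⟨F, hF, hEF hvE⟩

theorem dualGraph_adj_card_inter {d : ℕ} {Δ : Finset (Finset ℕ)} {F G : {F // F ∈ facets Δ}}
    (h : (dualGraph d Δ).Adj F G) : #((F : Finset ℕ) ∩ G) = d := by
  rcases (SimpleGraph.fromRel_adj _ _ _).mp h with ⟨-, hFG | hGF⟩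
  · exact hFG
  · rwa [inter_comm]

theorem UnitIntervalOrder.isFacet_of_subset_Icc {d : ℕ} {Δ : Finset (Finset ℕ)}
    (hU : UnitIntervalOrder d Δ) {F S : Finset ℕ} {a b : ℕ} (hF : IsFacet Δ F)
    (ha : a ∈ F) (hb : b ∈ F) (hS : S ⊆ Icc a b) (hcard : #S = d + 1) : IsFacet Δ S :=
  hU F hF ⟨a, ha⟩ S (hS.trans (Icc_subset_Icc (min'_le F a ha) (le_max' F b hb))) hcard

theorem StronglyConnected.exists_isFacet_le_and_ge {d : ℕ} {Δ : Finset (Finset ℕ)}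
    (hSC : StronglyConnected d Δ) (hd : 0 < d) {F G : Finset ℕ} {i : ℕ}
    (hF : IsFacet Δ F) (hG : IsFacet Δ G) (hFi : ∃ a ∈ F, a ≤ i) (hGi : ∃ b ∈ G, i + d ≤ b) :
    ∃ H, IsFacet Δ H ∧ (∃ a ∈ H, a ≤ i) ∧ ∃ b ∈ H, i + d ≤ b := by
  obtain ⟨⟨H, hH⟩, hHi, hHd⟩ := (hSC.preconnected ⟨F, mem_facets.mpr hF⟩
    ⟨G, mem_facets.mpr hG⟩).exists_and_of_adj
    (P := fun H : {H // H ∈ facets Δ} => ∃ a ∈ H.1, a ≤ i)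
    (Q := fun H : {H // H ∈ facets Δ} => ∃ b ∈ H.1, i + d ≤ b)
    hFi hGi fun X Y hXY hX => by
      push Not at hX
      obtain ⟨a, ha, hai⟩ := exists_le_of_forall_lt_add hd (dualGraph_adj_card_inter hXY).ge
        fun x hx => hX x (mem_inter.mp hx).1
      exact ⟨a, (mem_inter.mp ha).2, hai⟩
  exact ⟨H, mem_facets.mp hH, hHi, hHd⟩

theorem stmt16_general (n d : ℕ) (Δ : Finset (Finset ℕ))
    (hSC : StronglyConnected d Δ)
    (hU : UnitIntervalOrder d Δ) (hV : Δ.sup id = Finset.Icc 1 n) :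
    ∀ i, 1 ≤ i → i + d ≤ n → IsFacet Δ (Finset.Icc i (i + d)) := by
  intro i hi hin
  obtain ⟨Fi, hFi, hiFi⟩ := exists_isFacet_mem_of_mem_sup (v := i) (by rw [hV, mem_Icc]; omega)
  obtain ⟨Fn, hFn, hnFn⟩ := exists_isFacet_mem_of_mem_sup (v := n) (by rw [hV, mem_Icc]; omega)
  obtain ⟨F, hF, ⟨a, ha, hai⟩, b, hb, hbi⟩ :
      ∃ F, IsFacet Δ F ∧ (∃ a ∈ F, a ≤ i) ∧ ∃ b ∈ F, i + d ≤ b := by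
    rcases Nat.eq_zero_or_pos d with rfl | hd
    · exact ⟨Fi, hFi, ⟨i, hiFi, le_rfl⟩, i, hiFi, le_rfl⟩
    · exact hSC.exists_isFacet_le_and_ge hd hFi hFn ⟨i, hiFi, le_rfl⟩ ⟨n, hnFn, hin⟩
  exact hU.isFacet_of_subset_Icc hF ha hb (Icc_subset_Icc hai hbi) (by rw [Nat.card_Icc]; omega)

theorem stmt16 (n d : ℕ) (Δ : Finset (Finset ℕ))
    (hC : IsComplex Δ) (hP : IsPure d Δ) (hSC : StronglyConnected d Δ)
    (hU : UnitIntervalOrder d Δ) (hV : Δ.sup id = Finset.Icc 1 n) :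
    ∀ i, 1 ≤ i → i + d ≤ n → IsFacet Δ (Finset.Icc i (i + d)) :=
  stmt16_general n d Δ hSC hU hV
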